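/- arXiv:2408.10220 — 2 statements merged into one kernel-verified Lean document; each statement's English description precedes it below -/
import Mathlib

section
/- Let k > 0 and β > 0 be real numbers, and let r : ℝ → ℝ be a differentiable function satisfying r'(t) = k·r(t)·(β − r(t)²) for all t ≥ 0 with r(0) > 0. Then r(t) → √β as t → ∞; i.e. every forward trajectory of the radial equation starting at a positive radius converges to the limit-cycle radius √β. -/
open Set Filter

private lemma barrier_above {f F : ℝ → ℝ}
    (hf : ∀ t : ℝ, 0 ≤ t → HasDerivAt f (F t) t) {c : ℝ}
    (hF : ∀ t : ℝ, 0 ≤ t → c < f t → F t ≤ 0) (h0 : f 0 ≤ c) :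
    ∀ t : ℝ, 0 ≤ t → f t ≤ c := by
  intro t1 ht1
  by_contra h
  push_neg at h
  have hcont : ContinuousOn f (Icc 0 t1) := fun u hu =>
    (hf u hu.1).continuousAt.continuousWithinAt
  set S : Set ℝ := Icc (0:ℝ) t1 ∩ f ⁻¹' Iic c with hSdef
  have hne : S.Nonempty := ⟨0, ⟨le_refl 0, ht1⟩, h0⟩
  have hclosed : IsClosed S :=
    hcont.preimage_isClosed_of_isClosed isClosed_Icc isClosed_Iic
  have hcomp : IsCompact S := isCompact_Icc.of_isClosed_subset hclosed inter_subset_left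
  set s := sSup S with hsdef
  have hsmem : s ∈ S := hcomp.sSup_mem hne
  obtain ⟨⟨hs0, hst1⟩, hfs⟩ := hsmem
  have hfs' : f s ≤ c := hfs
  have hslt : s < t1 := by
    rcases lt_or_eq_of_le hst1 with h' | h'
    · exact h'
    · rw [h'] at hfs'; linarith
  have hgt : ∀ u, s < u → u ≤ t1 → c < f u := by
    intro u hu1 hu2
    by_contra hle
    push_neg at hle
    exact absurd (le_csSup hcomp.bddAbove ⟨⟨le_trans hs0 hu1.le, hu2⟩, hle⟩) (not_le.2 hu1)
  have hanti : AntitoneOn f (Icc s t1) := by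
    apply antitoneOn_of_deriv_nonpos (convex_Icc s t1)
      (hcont.mono (Icc_subset_Icc hs0 le_rfl))
    · intro x hx
      rw [interior_Icc] at hx
      exact (hf x (le_trans hs0 hx.1.le)).differentiableAt.differentiableWithinAt
    · intro x hx
      rw [interior_Icc] at hx
      rw [(hf x (le_trans hs0 hx.1.le)).deriv]
      exact hF x (le_trans hs0 hx.1.le) (hgt x hx.1 hx.2.le)
  have := hanti (left_mem_Icc.2 hslt.le) (right_mem_Icc.2 hslt.le) hslt.le
  linarith

private lemma barrier_below {f F : ℝ → ℝ}
    (hf : ∀ t : ℝ, 0 ≤ t → HasDerivAt f (F t) t) {c : ℝ}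
    (hF : ∀ t : ℝ, 0 ≤ t → f t < c → 0 ≤ F t) (h0 : c ≤ f 0) :
    ∀ t : ℝ, 0 ≤ t → c ≤ f t := by
  intro t ht
  have key := barrier_above (f := fun u => -f u) (F := fun u => -F u)
    (fun u hu => (hf u hu).neg) (c := -c)
    (fun u hu hcu => by
      have hcu' : -c < -f u := hcu
      have : f u < c := by linarith
      have := hF u hu this
      simpa using this)
    (by simpa using h0) t ht
  have key' : -f t ≤ -c := key
  linarith

private lemma mono_Ici {f F : ℝ → ℝ} (hf : ∀ t : ℝ, 0 ≤ t → HasDerivAt f (F t) t)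
    (hF : ∀ t : ℝ, 0 < t → 0 ≤ F t) : MonotoneOn f (Ici 0) := by
  apply monotoneOn_of_deriv_nonneg (convex_Ici 0)
    (fun u hu => (hf u hu).continuousAt.continuousWithinAt)
  · intro x hx
    rw [interior_Ici] at hx
    exact (hf x hx.le).differentiableAt.differentiableWithinAt
  · intro x hx
    rw [interior_Ici] at hx
    rw [(hf x hx.le).deriv]
    exact hF x hx

private lemma anti_Ici {f F : ℝ → ℝ} (hf : ∀ t : ℝ, 0 ≤ t → HasDerivAt f (F t) t)
    (hF : ∀ t : ℝ, 0 < t → F t ≤ 0) : AntitoneOn f (Ici 0) := by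
  apply antitoneOn_of_deriv_nonpos (convex_Ici 0)
    (fun u hu => (hf u hu).continuousAt.continuousWithinAt)
  · intro x hx
    rw [interior_Ici] at hx
    exact (hf x hx.le).differentiableAt.differentiableWithinAt
  · intro x hx
    rw [interior_Ici] at hx
    rw [(hf x hx.le).deriv]
    exact hF x hx

private lemma sign_neg_above {k β x : ℝ} (hk : 0 < k) (hβ : 0 < β)
    (hx : Real.sqrt β ≤ x) : k * x * (β - x ^ 2) ≤ 0 := by
  have hsβ : 0 < Real.sqrt β := Real.sqrt_pos.2 hβ
  have hsq : Real.sqrt β ^ 2 = β := Real.sq_sqrt hβ.le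
  have h1 : Real.sqrt β ^ 2 ≤ x ^ 2 := pow_le_pow_left₀ hsβ.le hx 2
  have h2 : β - x ^ 2 ≤ 0 := by linarith
  have h3 : 0 ≤ k * x := mul_nonneg hk.le (le_trans hsβ.le hx)
  exact mul_nonpos_of_nonneg_of_nonpos h3 h2

private lemma sign_pos_below {k β x : ℝ} (hk : 0 < k) (hβ : 0 < β)
    (hx0 : 0 ≤ x) (hx : x ≤ Real.sqrt β) : 0 ≤ k * x * (β - x ^ 2) := by
  have hsq : Real.sqrt β ^ 2 = β := Real.sq_sqrt hβ.le
  have h1 : x ^ 2 ≤ Real.sqrt β ^ 2 := pow_le_pow_left₀ hx0 hx 2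
  have h2 : 0 ≤ β - x ^ 2 := by linarith
  exact mul_nonneg (mul_nonneg hk.le hx0) h2

/-- Every forward trajectory of the radial equation
`ṙ = k·r·(β − r²)` (with `k > 0`, `β > 0`) starting at a positive radius
converges to the limit-cycle radius `√β`. -/
theorem radial_convergence_to_limit_cycle (k β : ℝ) (hk : 0 < k) (hβ : 0 < β)
    (r : ℝ → ℝ)
    (hr : ∀ t : ℝ, 0 ≤ t → HasDerivAt r (k * r t * (β - (r t) ^ 2)) t)
    (h0 : 0 < r 0) :
    Filter.Tendsto r Filter.atTop (nhds (Real.sqrt β)) := by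
  have hsβ : 0 < Real.sqrt β := Real.sqrt_pos.2 hβ
  have hsq : Real.sqrt β ^ 2 = β := Real.sq_sqrt hβ.le
  obtain ⟨M, hM⟩ : ∃ M, M = max (r 0) (Real.sqrt β) := ⟨_, rfl⟩
  have hMs : Real.sqrt β ≤ M := hM ▸ le_max_right _ _
  have hM0 : 0 < M := lt_of_lt_of_le hsβ hMs
  -- Step 1: upper bound r t ≤ M
  have hub : ∀ t : ℝ, 0 ≤ t → r t ≤ M := by
    apply barrier_above hr _ (hM ▸ le_max_left _ _)
    intro t ht hgt
    exact sign_neg_above hk hβ (le_trans hMs hgt.le)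
  -- Step 2: positivity
  have hpos : ∀ t : ℝ, 0 ≤ t → 0 < r t := by
    by_contra hcpos
    push_neg at hcpos
    obtain ⟨t1, ht1, hrt1⟩ := hcpos
    have hcont : ContinuousOn r (Icc 0 t1) := fun u hu =>
      (hr u hu.1).continuousAt.continuousWithinAt
    set S : Set ℝ := Icc (0:ℝ) t1 ∩ r ⁻¹' Iic 0 with hSdef
    have hne : S.Nonempty := ⟨t1, ⟨ht1, le_rfl⟩, hrt1⟩
    have hclosed : IsClosed S :=
      hcont.preimage_isClosed_of_isClosed isClosed_Icc isClosed_Iic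
    have hcomp : IsCompact S := isCompact_Icc.of_isClosed_subset hclosed inter_subset_left
    set s := sInf S with hsdef
    have hsmem : s ∈ S := hcomp.sInf_mem hne
    obtain ⟨⟨hs0, hst1⟩, hrs⟩ := hsmem
    have hrs' : r s ≤ 0 := hrs
    have hposlt : ∀ u, 0 ≤ u → u < s → 0 < r u := by
      intro u hu0 hus
      by_contra hle
      push_neg at hle
      exact absurd (csInf_le hcomp.bddBelow ⟨⟨hu0, le_trans hus.le hst1⟩, hle⟩)
        (not_le.2 hus)
    obtain ⟨a, ha⟩ : ∃ a, a = k * M ^ 2 := ⟨_, rfl⟩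
    have hg : ∀ u : ℝ, 0 ≤ u → HasDerivAt (fun u => r u * Real.exp (a * u))
        (k * r u * (β - r u ^ 2) * Real.exp (a * u) + r u * (Real.exp (a * u) * (a * 1))) u := by
      intro u hu
      exact (hr u hu).mul (((hasDerivAt_id u).const_mul a).exp)
    have hgmono : MonotoneOn (fun u => r u * Real.exp (a * u)) (Icc 0 s) := by
      apply monotoneOn_of_deriv_nonneg (convex_Icc 0 s)
        (fun u hu => (hg u hu.1).continuousAt.continuousWithinAt)
      · intro x hx
        rw [interior_Icc] at hx
        exact (hg x hx.1.le).differentiableAt.differentiableWithinAt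
      · intro x hx
        rw [interior_Icc] at hx
        rw [(hg x hx.1.le).deriv]
        have h1 : 0 < r x := hposlt x hx.1.le hx.2
        have h2 : r x ≤ M := hub x hx.1.le
        have h3 : 0 < Real.exp (a * x) := Real.exp_pos _
        have h4 : r x ^ 2 ≤ M ^ 2 := pow_le_pow_left₀ h1.le h2 2
        have key : 0 ≤ Real.exp (a * x) * (k * r x * (β + M ^ 2 - r x ^ 2)) :=
          mul_nonneg h3.le (mul_nonneg (mul_nonneg hk.le h1.le) (by linarith))
        rw [ha] at key ⊢
        nlinarith [key]
    have h0s : (0:ℝ) ∈ Icc (0:ℝ) s := ⟨le_rfl, hs0⟩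
    have hss : s ∈ Icc (0:ℝ) s := ⟨hs0, le_rfl⟩
    have hkey := hgmono h0s hss hs0
    simp only [mul_zero, Real.exp_zero, mul_one] at hkey
    have hneg : r s * Real.exp (a * s) ≤ 0 :=
      mul_nonpos_of_nonpos_of_nonneg hrs' (Real.exp_pos _).le
    linarith
  -- Step 3: case analysis
  rcases le_or_gt (r 0) (Real.sqrt β) with hcase | hcase
  · -- r stays ≤ √β and is monotone increasing
    have hub2 : ∀ t : ℝ, 0 ≤ t → r t ≤ Real.sqrt β := by
      apply barrier_above hr _ hcase
      intro t ht hgt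
      exact sign_neg_above hk hβ hgt.le
    have hmono : MonotoneOn r (Ici 0) := by
      apply mono_Ici hr
      intro t ht
      exact sign_pos_below hk hβ (hpos t ht.le).le (hub2 t ht.le)
    obtain ⟨g, hgdef⟩ : ∃ g : ℝ → ℝ, g = fun t => r (max t 0) := ⟨_, rfl⟩
    have hmonog : Monotone g := by
      intro u v huv
      rw [hgdef]
      exact hmono (mem_Ici.2 (le_max_right u 0)) (mem_Ici.2 (le_max_right v 0))
        (max_le_max huv le_rfl)
    have hbdd : BddAbove (Set.range g) := by
      refine ⟨Real.sqrt β, ?_⟩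
      rintro _ ⟨u, rfl⟩
      rw [hgdef]
      exact hub2 _ (le_max_right u 0)
    obtain ⟨L, hLdef⟩ : ∃ L, L = ⨆ u, g u := ⟨_, rfl⟩
    have htend : Tendsto g atTop (nhds L) := hLdef ▸ tendsto_atTop_ciSup hmonog hbdd
    have hrL : ∀ t : ℝ, 0 ≤ t → r t ≤ L := by
      intro t ht
      have := le_ciSup hbdd t
      rw [hgdef] at this
      rw [hLdef, hgdef]
      simpa [max_eq_left ht] using this
    have hLle : L ≤ Real.sqrt β := by
      rw [hLdef]
      exact ciSup_le fun u => by rw [hgdef]; exact hub2 _ (le_max_right u 0)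
    have hL0 : r 0 ≤ L := by simpa using hrL 0 le_rfl
    have htendr : Tendsto r atTop (nhds L) := by
      apply htend.congr'
      filter_upwards [eventually_ge_atTop (0:ℝ)] with t ht
      rw [hgdef]
      simp [max_eq_left ht]
    rcases eq_or_lt_of_le hLle with hEq | hlt
    · rwa [hEq] at htendr
    · exfalso
      obtain ⟨c, hc⟩ : ∃ c, c = k * r 0 * (β - L ^ 2) := ⟨_, rfl⟩
      have hLpos : 0 < L := lt_of_lt_of_le h0 hL0
      have hL2 : L ^ 2 < β := by
        have h := pow_lt_pow_left₀ hlt hLpos.le (n := 2) (by norm_num)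
        linarith [hsq ▸ h]
      have hcpos : 0 < c := by
        rw [hc]; exact mul_pos (mul_pos hk h0) (by linarith)
      have hmono2 : MonotoneOn (fun t => r t - c * t) (Ici 0) := by
        apply mono_Ici (F := fun t => k * r t * (β - r t ^ 2) - c * 1)
          (fun t ht => (hr t ht).sub ((hasDerivAt_id t).const_mul c))
        intro t ht
        have h1 : 0 < r t := hpos t ht.le
        have h2 : r t ≤ L := hrL t ht.le
        have h3 : r 0 ≤ r t := hmono self_mem_Ici (mem_Ici.2 ht.le) ht.le
        have h4 : r t ^ 2 ≤ L ^ 2 := pow_le_pow_left₀ h1.le h2 2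
        have key1 : 0 ≤ k * r 0 * (L ^ 2 - r t ^ 2) :=
          mul_nonneg (mul_nonneg hk.le h0.le) (by linarith)
        have key2 : 0 ≤ k * (r t - r 0) * (β - r t ^ 2) :=
          mul_nonneg (mul_nonneg hk.le (by linarith)) (by linarith)
        rw [hc]
        nlinarith [key1, key2]
      obtain ⟨T, hT⟩ : ∃ T, T = max (0:ℝ) ((Real.sqrt β - r 0) / c + 1) := ⟨_, rfl⟩
      have hT0 : (0:ℝ) ≤ T := hT ▸ le_max_left _ _
      have hkey := hmono2 self_mem_Ici (mem_Ici.2 hT0) hT0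
      simp only [mul_zero, sub_zero] at hkey
      have hTub : r T ≤ Real.sqrt β := hub2 T hT0
      have hTge : (Real.sqrt β - r 0) / c + 1 ≤ T := hT ▸ le_max_right _ _
      have hdiv : Real.sqrt β - r 0 ≤ (T - 1) * c := by
        rw [← div_le_iff₀ hcpos]; linarith
      nlinarith [hkey, hTub, hdiv, hcpos]
  · -- r stays ≥ √β and is monotone decreasing
    have hlb2 : ∀ t : ℝ, 0 ≤ t → Real.sqrt β ≤ r t := by
      apply barrier_below hr _ hcase.le
      intro t ht hlt
      exact sign_pos_below hk hβ (hpos t ht).le hlt.le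
    have hanti : AntitoneOn r (Ici 0) := by
      apply anti_Ici hr
      intro t ht
      exact sign_neg_above hk hβ (hlb2 t ht.le)
    obtain ⟨g, hgdef⟩ : ∃ g : ℝ → ℝ, g = fun t => r (max t 0) := ⟨_, rfl⟩
    have hantig : Antitone g := by
      intro u v huv
      rw [hgdef]
      exact hanti (mem_Ici.2 (le_max_right u 0)) (mem_Ici.2 (le_max_right v 0))
        (max_le_max huv le_rfl)
    have hbdd : BddBelow (Set.range g) := by
      refine ⟨Real.sqrt β, ?_⟩
      rintro _ ⟨u, rfl⟩
      rw [hgdef]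
      exact hlb2 _ (le_max_right u 0)
    obtain ⟨L, hLdef⟩ : ∃ L, L = ⨅ u, g u := ⟨_, rfl⟩
    have htend : Tendsto g atTop (nhds L) := hLdef ▸ tendsto_atTop_ciInf hantig hbdd
    have hrL : ∀ t : ℝ, 0 ≤ t → L ≤ r t := by
      intro t ht
      have := ciInf_le hbdd t
      rw [hgdef] at this
      rw [hLdef, hgdef]
      simpa [max_eq_left ht] using this
    have hLge : Real.sqrt β ≤ L := by
      rw [hLdef]
      exact le_ciInf fun u => by rw [hgdef]; exact hlb2 _ (le_max_right u 0)
    have htendr : Tendsto r atTop (nhds L) := by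
      apply htend.congr'
      filter_upwards [eventually_ge_atTop (0:ℝ)] with t ht
      rw [hgdef]
      simp [max_eq_left ht]
    rcases eq_or_lt_of_le hLge with hEq | hlt
    · rwa [← hEq] at htendr
    · exfalso
      obtain ⟨c, hc⟩ : ∃ c, c = k * L * (L ^ 2 - β) := ⟨_, rfl⟩
      have hLpos : 0 < L := lt_trans hsβ hlt
      have hL2 : β < L ^ 2 := by
        have h := pow_lt_pow_left₀ hlt hsβ.le (n := 2) (by norm_num)
        linarith [hsq ▸ h]
      have hcpos : 0 < c := by
        rw [hc]; exact mul_pos (mul_pos hk hLpos) (by linarith)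
      have hanti2 : AntitoneOn (fun t => r t + c * t) (Ici 0) := by
        apply anti_Ici (F := fun t => k * r t * (β - r t ^ 2) + c * 1)
          (fun t ht => (hr t ht).add ((hasDerivAt_id t).const_mul c))
        intro t ht
        have h2 : L ≤ r t := hrL t ht.le
        have h4 : L ^ 2 ≤ r t ^ 2 := pow_le_pow_left₀ hLpos.le h2 2
        have key1 : 0 ≤ k * L * (r t ^ 2 - L ^ 2) :=
          mul_nonneg (mul_nonneg hk.le hLpos.le) (by linarith)
        have key2 : 0 ≤ k * (r t - L) * (r t ^ 2 - β) :=
          mul_nonneg (mul_nonneg hk.le (by linarith)) (by linarith)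
        rw [hc]
        nlinarith [key1, key2]
      obtain ⟨T, hT⟩ : ∃ T, T = max (0:ℝ) ((r 0 - Real.sqrt β) / c + 1) := ⟨_, rfl⟩
      have hT0 : (0:ℝ) ≤ T := hT ▸ le_max_left _ _
      have hkey := hanti2 self_mem_Ici (mem_Ici.2 hT0) hT0
      simp only [mul_zero, add_zero] at hkey
      have hTlb : Real.sqrt β ≤ r T := hlb2 T hT0
      have hTge : (r 0 - Real.sqrt β) / c + 1 ≤ T := hT ▸ le_max_right _ _
      have hdiv : r 0 - Real.sqrt β ≤ (T - 1) * c := by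
        rw [← div_le_iff₀ hcpos]; linarith
      nlinarith [hkey, hTlb, hdiv, hcpos]
end

section
/- Let p, w, A, B, C be real numbers with (p,w) ≠ (0,0) and A + B > 0, let κ = κ(p,w), F = ((A,C),(C,B)) symmetric, and J = κ·F. Define p₀ = trace(J)/2, w₀ = (J₂₁ − J₁₂)/2 and κ₀ = κ(p₀, w₀). Then κ₀ is invertible, F₀ := κ₀^{-1}·J equals (2/(A+B))·F, and in particular F₀ is symmetric with trace(F₀) = 2; i.e. the normalisation κ₀ built from the divergence and curl of the linear field determines a unique symmetric factor F₀ of unit mean curvature. -/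
/-- For `(p,w) ≠ (0,0)`, `A + B > 0`, `κ = κ(p,w)`,
`F = ((A,C),(C,B))` and `J = κ·F`, set `p₀ = trace(J)/2`, `w₀ = (J₂₁ − J₀₁)/2`
and `κ₀ = κ(p₀,w₀)`. Then `κ₀` is invertible, `F₀ := κ₀⁻¹·J = (2/(A+B))·F`, and
`F₀` is symmetric of trace `2`: the normalisation built from divergence and curl
determines a unique symmetric factor of unit mean curvature. -/
theorem normalized_polar_like_factorization (p w A B C : ℝ)
    (hpw : (p, w) ≠ (0, 0)) (hAB : 0 < A + B) :
    ∀ J κ₀ : Matrix (Fin 2) (Fin 2) ℝ,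
      J = !![p, -w; w, p] * !![A, C; C, B] →
      κ₀ = !![Matrix.trace J / 2, -((J 1 0 - J 0 1) / 2);
              (J 1 0 - J 0 1) / 2, Matrix.trace J / 2] →
      IsUnit κ₀
      ∧ κ₀⁻¹ * J = (2 / (A + B)) • !![A, C; C, B]
      ∧ Matrix.transpose (κ₀⁻¹ * J) = κ₀⁻¹ * J
      ∧ Matrix.trace (κ₀⁻¹ * J) = 2 := by
  intro J κ₀ hJ hκ
  have hpw' : p ^ 2 + w ^ 2 ≠ 0 := by
    rcases (not_and_or.mp (by simpa [Prod.ext_iff] using hpw)) with h | h <;> positivity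
  have hAB' : A + B ≠ 0 := ne_of_gt hAB
  subst hJ
  have hκ' : κ₀ = !![p * (A + B) / 2, -(w * (A + B) / 2);
      w * (A + B) / 2, p * (A + B) / 2] := by
    rw [hκ]
    ext i j
    fin_cases i <;> fin_cases j <;>
      simp [Matrix.trace_fin_two, Matrix.mul_apply, Fin.sum_univ_two] <;> ring
  have hdet : κ₀.det ≠ 0 := by
    rw [hκ']
    simp [Matrix.det_fin_two_of]
    intro h
    apply hpw'
    have : (p ^ 2 + w ^ 2) * ((A + B) / 2) ^ 2 = 0 := by rw [← h]; ring
    rcases mul_eq_zero.mp this with h' | h'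
    · exact h'
    · exact absurd h' (by positivity)
  have hunit : IsUnit κ₀ := (Matrix.isUnit_iff_isUnit_det κ₀).mpr hdet.isUnit
  have key : κ₀ * ((2 / (A + B)) • !![A, C; C, B]) =
      !![p, -w; w, p] * !![A, C; C, B] := by
    rw [hκ']
    ext i j
    fin_cases i <;> fin_cases j <;>
      simp [Matrix.mul_apply, Fin.sum_univ_two] <;> field_simp <;> ring
  have hinv : κ₀⁻¹ * (!![p, -w; w, p] * !![A, C; C, B]) =
      (2 / (A + B)) • !![A, C; C, B] := by
    rw [← key, ← Matrix.mul_assoc, Matrix.nonsing_inv_mul κ₀ hdet.isUnit, Matrix.one_mul]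
  refine ⟨hunit, hinv, ?_, ?_⟩
  · rw [hinv]
    ext i j
    fin_cases i <;> fin_cases j <;> simp [Matrix.transpose_apply]
  · rw [hinv]
    simp [Matrix.trace_fin_two]
    field_simp
end
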